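/- arXiv:1010.0649 — 2 statements merged into one kernel-verified Lean document; each statement's English description precedes it below -/
import Mathlib

section
/- Let S be a nonempty set with SN : S → Finset S such that a ∈ SN(a) for all a. Define the bounding relation aBb iff a ≠ b and b ∈ SN(a). Suppose B is transitive and (as follows from thin frontiers) asymmetric. If aBb and bBc then SN(c) ⊊ SN(b) ⊊ SN(a); consequently there is no infinite strictly descending chain a₁ B a₂ B a₃ B ..., and hence every element of S is bounded below in the chain order by a maximal element: for every a ∈ S there exists m ∈ SN(a) such that m bounds no other element (SN(m) = {m}). -/
/-- with B (aBb ↔ a ≠ b ∧ b ∈ SN a) asymmetric and transitive,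
chains aBbBc give strict inclusions of smallest neighborhoods, there is no
infinite descending B-chain, and every SN(a) contains a maximum element m
(one with SN(m) = {m}). -/
theorem stmt_3 {S : Type*} [DecidableEq S] [Nonempty S] (SN : S → Finset S)
    (hrefl : ∀ a, a ∈ SN a)
    (B : S → S → Prop) (hB : ∀ a b, B a b ↔ a ≠ b ∧ b ∈ SN a)
    (hasymm : ∀ a b, B a b → ¬ B b a)
    (htrans : ∀ a b c, B a b → B b c → B a c) :
    (∀ a b c, B a b → B b c → SN c ⊂ SN b ∧ SN b ⊂ SN a) ∧
    (¬ ∃ f : ℕ → S, ∀ n, B (f n) (f (n + 1))) ∧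
    (∀ a : S, ∃ m ∈ SN a, SN m = {m}) := by
  have key : ∀ a b, B a b → SN b ⊂ SN a := by
    intro a b hab
    constructor
    · intro x hx
      by_cases hxb : x = b
      · subst hxb; exact (hB a x).mp hab |>.2
      · have hbx : B b x := (hB b x).mpr ⟨fun h => hxb h.symm, hx⟩
        exact ((hB a x).mp (htrans a b x hab hbx)).2
    · intro hsub
      have ha : a ∈ SN b := hsub (hrefl a)
      have hne : a ≠ b := ((hB a b).mp hab).1
      exact hasymm a b hab ((hB b a).mpr ⟨hne.symm, ha⟩)
  refine ⟨fun a b c hab hbc => ⟨key b c hbc, key a b hab⟩, ?_, ?_⟩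
  · rintro ⟨f, hf⟩
    have hdec : ∀ n, (SN (f (n + 1))).card < (SN (f n)).card := fun n =>
      Finset.card_lt_card (key _ _ (hf n))
    have hle : ∀ n, (SN (f n)).card + n ≤ (SN (f 0)).card := by
      intro n
      induction n with
      | zero => simp
      | succ k ihk => have := hdec k; omega
    have := hle ((SN (f 0)).card + 1)
    omega
  · suffices H : ∀ n a, (SN a).card = n → ∃ m ∈ SN a, SN m = {m} by
      exact fun a => H _ a rfl
    intro n
    induction n using Nat.strong_induction_on with
    | _ n ih =>
      intro a hn
      by_cases h : ∃ b ∈ SN a, b ≠ a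
      · obtain ⟨b, hb, hba⟩ := h
        have hab : B a b := (hB a b).mpr ⟨hba.symm, hb⟩
        have hlt : (SN b).card < n := hn ▸ Finset.card_lt_card (key a b hab)
        obtain ⟨m, hm, hms⟩ := ih _ hlt b rfl
        exact ⟨m, (key a b hab).1 hm, hms⟩
      · push_neg at h
        refine ⟨a, hrefl a, ?_⟩
        ext x
        simp only [Finset.mem_singleton]
        exact ⟨fun hx => h x hx, fun hx => hx ▸ hrefl a⟩
end

section
/- In the 2-dimensional Cartesian complex, if p and q are two 8-adjacent but not 4-adjacent pixels (principal cells with d²(p,q) = 2), then Cl({p}) ∩ Cl({q}) is a singleton; consequently, for the adjacency pair (8,8) in Z², no assignment of the cells of lower dimension to foreground and background can simultaneously make two diagonally crossing 8-connected pairs (one foreground pair and one background pair sharing the same 0-cell) both topologically connected via that shared common face. -/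
/-- Common faces of two principal cells of the 2D Cartesian complex in
semi-combinatorial coordinates. -/
def stmt19CF (V W : Fin 2 → ℤ) : Set (Fin 2 → ℚ) :=
  {c | (∀ i, ∃ m : ℤ, c i = m / 2) ∧ (∀ i, |c i - V i| ≤ 1 / 2) ∧ (∀ i, |c i - W i| ≤ 1 / 2)}

lemma stmt19_sq_one (p q : Fin 2 → ℤ) (h : ∑ i, (p i - q i) ^ 2 = 2) (i : Fin 2) :
    (p i - q i) ^ 2 = 1 := by
  rw [Fin.sum_univ_two] at h
  have key : (p 0 - q 0) ^ 2 = 1 ∧ (p 1 - q 1) ^ 2 = 1 := by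
    have ha : |p 0 - q 0| ≤ 1 := by nlinarith [sq_abs (p 0 - q 0), abs_nonneg (p 0 - q 0), sq_nonneg (p 1 - q 1)]
    have hb : |p 1 - q 1| ≤ 1 := by nlinarith [sq_abs (p 1 - q 1), abs_nonneg (p 1 - q 1), sq_nonneg (p 0 - q 0)]
    have ha' := abs_le.mp ha
    have hb' := abs_le.mp hb
    constructor <;> nlinarith [ha'.1, ha'.2, hb'.1, hb'.2]
  fin_cases i
  · exact key.1
  · exact key.2

lemma stmt19_singleton (p q : Fin 2 → ℤ) (h : ∑ i, (p i - q i) ^ 2 = 2) :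
    stmt19CF p q = {fun i => ((p i : ℚ) + (q i : ℚ)) / 2} := by
  have hsq : ∀ i, ((p i : ℚ) - q i) ^ 2 = 1 := by
    intro i
    have := stmt19_sq_one p q h i
    have : ((((p i - q i) ^ 2 : ℤ)) : ℚ) = ((1 : ℤ) : ℚ) := by rw [this]
    push_cast at this
    linarith
  ext c
  simp only [stmt19CF, Set.mem_setOf_eq, Set.mem_singleton_iff]
  constructor
  · rintro ⟨_, hp, hq⟩
    funext i
    have hxp := abs_le.mp (hp i)
    have hxq := abs_le.mp (hq i)
    have hs := hsq i
    have hz : (2 * c i - (p i + q i)) ^ 2 = 0 := by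
      have hnn := sq_nonneg (2 * c i - ((p i : ℚ) + q i))
      nlinarith [hxp.1, hxp.2, hxq.1, hxq.2]
    have := pow_eq_zero_iff (n := 2) (by norm_num) |>.mp hz
    linarith
  · rintro rfl
    have habs : ∀ i, |(p i : ℚ) - q i| = 1 := by
      intro i
      have hs := hsq i
      have : (((p i : ℚ) - q i) - 1) * (((p i : ℚ) - q i) + 1) = 0 := by ring_nf; linarith
      rcases mul_eq_zero.mp this with h' | h'
      · rw [show ((p i : ℚ) - q i) = 1 by linarith]; norm_num
      · rw [show ((p i : ℚ) - q i) = -1 by linarith]; norm_num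
    refine ⟨fun i => ⟨p i + q i, by push_cast; ring⟩, fun i => ?_, fun i => ?_⟩
    · have := habs i
      rw [show ((p i : ℚ) + q i) / 2 - p i = -(((p i : ℚ) - q i)) / 2 by ring,
        abs_div, abs_neg, this]
      norm_num
    · have := habs i
      rw [show ((p i : ℚ) + q i) / 2 - q i = (((p i : ℚ) - q i)) / 2 by ring,
        abs_div, this]
      norm_num

/-- for 8-adjacent but not 4-adjacent pixels p, q (d² = 2) the
common faces form the singleton {(p+q)/2}; consequently, if a foreground
diagonal pair (V₁,V₂) and a background diagonal pair (W₁,W₂) share the same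
0-cell, no assignment T of cells to the foreground can connect both pairs
through a common face: that would put the shared 0-cell in both T and Tᶜ. -/
theorem stmt_19 :
    (∀ p q : Fin 2 → ℤ, (∑ i, (p i - q i) ^ 2 = 2) →
      stmt19CF p q = {fun i => ((p i : ℚ) + (q i : ℚ)) / 2}) ∧
    (∀ (T : Set (Fin 2 → ℚ)) (V₁ V₂ W₁ W₂ : Fin 2 → ℤ),
      (∑ i, (V₁ i - V₂ i) ^ 2 = 2) → (∑ i, (W₁ i - W₂ i) ^ 2 = 2) →
      (fun i => ((V₁ i : ℚ) + (V₂ i : ℚ)) / 2) = (fun i => ((W₁ i : ℚ) + (W₂ i : ℚ)) / 2) →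
      ¬ ((∃ c ∈ stmt19CF V₁ V₂, c ∈ T) ∧ (∃ c ∈ stmt19CF W₁ W₂, c ∉ T))) := by
  refine ⟨stmt19_singleton, ?_⟩
  rintro T V₁ V₂ W₁ W₂ hV hW hmid ⟨⟨c, hcV, hcT⟩, ⟨d, hdW, hdT⟩⟩
  rw [stmt19_singleton V₁ V₂ hV] at hcV
  rw [stmt19_singleton W₁ W₂ hW] at hdW
  apply hdT
  rw [Set.mem_singleton_iff] at hcV hdW
  rw [hdW, ← hmid, ← hcV]
  exact hcT
end
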